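/- In any orthomodular lattice, ((a ∪ b) ≡ c) ∩ (a ≡ b) = (a ≡ c) ∩ (a ≡ b), where x ≡ y := (x ∩ y) ∪ (x' ∩ y'). -/

import Mathlib

class Ortholattice (α : Type*) extends Lattice α, BoundedOrder α, Compl α where
  compl_compl : ∀ a : α, aᶜᶜ = a
  sup_compl : ∀ a : α, a ⊔ aᶜ = ⊤
  inf_compl : ∀ a : α, a ⊓ aᶜ = ⊥
  compl_antitone : ∀ a b : α, a ≤ b → bᶜ ≤ aᶜ

class OrthomodularLattice (α : Type*) extends Ortholattice α where
  orthomodular : ∀ a b : α, a ≤ b → b = a ⊔ (aᶜ ⊓ b)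

namespace OMLaux

variable {α : Type*} [OrthomodularLattice α]

lemma cc (a : α) : aᶜᶜ = a := Ortholattice.compl_compl a

lemma anti {a b : α} (h : a ≤ b) : bᶜ ≤ aᶜ := Ortholattice.compl_antitone a b h

lemma le_compl_swap {a b : α} (h : a ≤ bᶜ) : b ≤ aᶜ := by
  have := anti h; rwa [cc] at this

lemma inf_compl_self' (a : α) : a ⊓ aᶜ = ⊥ := Ortholattice.inf_compl a

lemma compl_inf_self' (a : α) : aᶜ ⊓ a = ⊥ := by
  rw [inf_comm]; exact inf_compl_self' a

lemma compl_sup' (a b : α) : (a ⊔ b)ᶜ = aᶜ ⊓ bᶜ := by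
  apply le_antisymm
  · exact le_inf (anti le_sup_left) (anti le_sup_right)
  · apply le_compl_swap
    exact sup_le (le_compl_swap inf_le_left) (le_compl_swap inf_le_right)

lemma compl_inf' (a b : α) : (a ⊓ b)ᶜ = aᶜ ⊔ bᶜ := by
  rw [← cc (aᶜ ⊔ bᶜ), compl_sup', cc, cc]

/-- Key lemma: if `p ≤ y` and `q ≤ yᶜ`, then `y ⊓ (p ⊔ q) = p`. -/
lemma L1 {y p q : α} (hp : p ≤ y) (hq : q ≤ yᶜ) : y ⊓ (p ⊔ q) = p := by
  have hw : p ≤ y ⊓ (p ⊔ q) := le_inf hp le_sup_left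
  have hom := OrthomodularLattice.orthomodular p (y ⊓ (p ⊔ q)) hw
  have hz : pᶜ ⊓ (y ⊓ (p ⊔ q)) = ⊥ := by
    apply le_antisymm _ bot_le
    have hy : y ≤ qᶜ := le_compl_swap hq
    have h1 : pᶜ ⊓ (y ⊓ (p ⊔ q)) ≤ (p ⊔ q)ᶜ ⊓ (p ⊔ q) := by
      rw [compl_sup']
      refine le_inf (le_inf inf_le_left ?_) ?_
      · exact le_trans inf_le_right (le_trans inf_le_left hy)
      · exact le_trans inf_le_right inf_le_right
    calc pᶜ ⊓ (y ⊓ (p ⊔ q)) ≤ (p ⊔ q)ᶜ ⊓ (p ⊔ q) := h1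
    _ = ⊥ := compl_inf_self' _
  rw [hz, sup_bot_eq] at hom
  exact hom

/-- Commutation relation. -/
def Cm (a b : α) : Prop := a = (a ⊓ b) ⊔ (a ⊓ bᶜ)

lemma Cm_compl {a b : α} (h : Cm a b) : Cm a bᶜ := by
  unfold Cm at *
  rw [cc, sup_comm]
  exact h

lemma Cm_symm {a b : α} (h : Cm a b) : Cm b a := by
  unfold Cm at *
  -- first: b ⊓ (a ⊔ bᶜ) = a ⊓ b
  have hab : a ⊔ bᶜ = (a ⊓ b) ⊔ bᶜ := by
    conv_lhs => rw [h]
    rw [sup_assoc]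
    congr 1
    exact sup_eq_right.mpr inf_le_right
  have h2 : b ⊓ (a ⊔ bᶜ) = a ⊓ b := by
    rw [hab]
    exact L1 inf_le_right le_rfl
  set s := (b ⊓ a) ⊔ (b ⊓ aᶜ) with hs
  have hsb : s ≤ b := sup_le inf_le_left inf_le_left
  have hom := OrthomodularLattice.orthomodular s b hsb
  have hsc : sᶜ ⊓ b = ⊥ := by
    rw [hs, compl_sup', compl_inf', compl_inf', cc]
    apply le_antisymm _ bot_le
    have : (bᶜ ⊔ aᶜ) ⊓ (bᶜ ⊔ a) ⊓ b ≤ (a ⊓ b)ᶜ ⊓ (a ⊓ b) := by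
      refine le_inf ?_ ?_
      · rw [compl_inf']
        exact le_trans inf_le_left (le_trans inf_le_left (sup_le le_sup_right le_sup_left))
      · have : (bᶜ ⊔ aᶜ) ⊓ (bᶜ ⊔ a) ⊓ b ≤ b ⊓ (a ⊔ bᶜ) := by
          refine le_inf inf_le_right ?_
          exact le_trans inf_le_left (le_trans inf_le_right (sup_le le_sup_right le_sup_left))
        rw [h2] at this
        exact this
    calc (bᶜ ⊔ aᶜ) ⊓ (bᶜ ⊔ a) ⊓ b ≤ (a ⊓ b)ᶜ ⊓ (a ⊓ b) := this
    _ = ⊥ := compl_inf_self' _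
  rw [hsc, sup_bot_eq] at hom
  exact hom

lemma Cm_sup {a b c : α} (hb : Cm a b) (hc : Cm a c) : Cm a (b ⊔ c) := by
  have hb' := Cm_symm hb
  have hc' := Cm_symm hc
  unfold Cm at hb' hc'
  apply Cm_symm
  unfold Cm
  have hdec : b ⊔ c = ((b ⊓ a) ⊔ (c ⊓ a)) ⊔ ((b ⊓ aᶜ) ⊔ (c ⊓ aᶜ)) := by
    conv_lhs => rw [hb', hc']
    simp only [sup_assoc, sup_comm, sup_left_comm]
  have hP : (b ⊓ a) ⊔ (c ⊓ a) ≤ a := sup_le inf_le_right inf_le_right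
  have hQ : (b ⊓ aᶜ) ⊔ (c ⊓ aᶜ) ≤ aᶜ := sup_le inf_le_right inf_le_right
  have e1 : (b ⊔ c) ⊓ a = (b ⊓ a) ⊔ (c ⊓ a) := by
    rw [inf_comm, hdec]
    exact L1 hP hQ
  have e2 : (b ⊔ c) ⊓ aᶜ = (b ⊓ aᶜ) ⊔ (c ⊓ aᶜ) := by
    rw [inf_comm, hdec, sup_comm ((b ⊓ a) ⊔ (c ⊓ a))]
    refine L1 hQ ?_
    rw [cc]
    exact hP
  rw [e1, e2, ← hdec]

lemma Cm_inf {a b c : α} (hb : Cm a b) (hc : Cm a c) : Cm a (b ⊓ c) := by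
  have h := Cm_compl (Cm_sup (Cm_compl hb) (Cm_compl hc))
  rwa [compl_sup', cc, cc] at h

/-- e₁ := (x ⊓ y) ⊔ (xᶜ ⊓ yᶜ) satisfies e₁ ⊓ y = x ⊓ y. -/
lemma equiv_inf (x y : α) : ((x ⊓ y) ⊔ (xᶜ ⊓ yᶜ)) ⊓ y = x ⊓ y := by
  rw [inf_comm]
  exact L1 inf_le_right inf_le_right

lemma equiv_inf_compl (x y : α) : ((x ⊓ y) ⊔ (xᶜ ⊓ yᶜ)) ⊓ yᶜ = xᶜ ⊓ yᶜ := by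
  rw [inf_comm, sup_comm]
  refine L1 inf_le_right ?_
  rw [cc]
  exact inf_le_right

lemma Cm_equiv (x y : α) : Cm ((x ⊓ y) ⊔ (xᶜ ⊓ yᶜ)) y := by
  unfold Cm
  rw [equiv_inf, equiv_inf_compl]

lemma equiv_inf_left (y z : α) : y ⊓ ((y ⊓ z) ⊔ (yᶜ ⊓ zᶜ)) = y ⊓ z :=
  L1 inf_le_left inf_le_left

lemma equiv_inf_left_compl (y z : α) : yᶜ ⊓ ((y ⊓ z) ⊔ (yᶜ ⊓ zᶜ)) = yᶜ ⊓ zᶜ := by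
  rw [sup_comm]
  refine L1 inf_le_left ?_
  rw [cc]
  exact inf_le_left

lemma Cm_equiv_left (y z : α) : Cm ((y ⊓ z) ⊔ (yᶜ ⊓ zᶜ)) y := by
  unfold Cm
  rw [inf_comm _ y, equiv_inf_left, inf_comm _ yᶜ, equiv_inf_left_compl]

/-- Transitivity of the symmetric identity. -/
lemma equiv_trans (x y z : α) :
    ((x ⊓ y) ⊔ (xᶜ ⊓ yᶜ)) ⊓ ((y ⊓ z) ⊔ (yᶜ ⊓ zᶜ)) ≤ (x ⊓ z) ⊔ (xᶜ ⊓ zᶜ) := by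
  set e1 := (x ⊓ y) ⊔ (xᶜ ⊓ yᶜ) with he1
  set e2 := (y ⊓ z) ⊔ (yᶜ ⊓ zᶜ) with he2
  have hC : Cm (e1 ⊓ e2) y :=
    Cm_symm (Cm_inf (Cm_symm (Cm_equiv x y)) (Cm_symm (Cm_equiv_left y z)))
  have hy : e1 ⊓ e2 ⊓ y = x ⊓ y ⊓ z := by
    rw [inf_assoc, inf_comm e2 y, he2, equiv_inf_left, ← inf_assoc, he1, equiv_inf x y]
  have hyc : e1 ⊓ e2 ⊓ yᶜ = xᶜ ⊓ yᶜ ⊓ zᶜ := by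
    rw [inf_assoc, inf_comm e2 yᶜ, he2, equiv_inf_left_compl, ← inf_assoc, he1,
      equiv_inf_compl x y]
  calc e1 ⊓ e2 = (e1 ⊓ e2 ⊓ y) ⊔ (e1 ⊓ e2 ⊓ yᶜ) := hC
  _ = (x ⊓ y ⊓ z) ⊔ (xᶜ ⊓ yᶜ ⊓ zᶜ) := by rw [hy, hyc]
  _ ≤ (x ⊓ z) ⊔ (xᶜ ⊓ zᶜ) := by
      refine sup_le_sup ?_ ?_
      · exact le_inf (le_trans inf_le_left inf_le_left) inf_le_right
      · exact le_inf (le_trans inf_le_left inf_le_left) inf_le_right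

end OMLaux

theorem stmt16 {α : Type*} [OrthomodularLattice α] (a b c : α) :
    (((a ⊔ b) ⊓ c) ⊔ ((a ⊔ b)ᶜ ⊓ cᶜ)) ⊓ ((a ⊓ b) ⊔ (aᶜ ⊓ bᶜ)) = ((a ⊓ c) ⊔ (aᶜ ⊓ cᶜ)) ⊓ ((a ⊓ b) ⊔ (aᶜ ⊓ bᶜ)) := by
  open OMLaux in
  set d := a ⊔ b with hd
  -- e ≤ a ≡ d
  have hed : (a ⊓ b) ⊔ (aᶜ ⊓ bᶜ) ≤ (a ⊓ d) ⊔ (aᶜ ⊓ dᶜ) := by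
    have h1 : a ⊓ d = a := inf_eq_left.mpr le_sup_left
    have h2 : aᶜ ⊓ dᶜ = aᶜ ⊓ bᶜ := by
      rw [hd, compl_sup', ← inf_assoc, inf_idem]
    rw [h1, h2]
    exact sup_le_sup_right inf_le_left _
  apply le_antisymm
  · refine le_inf ?_ inf_le_right
    -- (d≡c) ⊓ e ≤ (a≡d) ⊓ (d≡c) ≤ a≡c
    have : ((d ⊓ c) ⊔ (dᶜ ⊓ cᶜ)) ⊓ ((a ⊓ b) ⊔ (aᶜ ⊓ bᶜ)) ≤
        ((a ⊓ d) ⊔ (aᶜ ⊓ dᶜ)) ⊓ ((d ⊓ c) ⊔ (dᶜ ⊓ cᶜ)) :=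
      le_inf (le_trans inf_le_right hed) inf_le_left
    exact le_trans this (equiv_trans a d c)
  · refine le_inf ?_ inf_le_right
    -- (a≡c) ⊓ e ≤ (d≡a) ⊓ (a≡c) ≤ d≡c
    have hda : (a ⊓ d) ⊔ (aᶜ ⊓ dᶜ) = (d ⊓ a) ⊔ (dᶜ ⊓ aᶜ) := by
      rw [inf_comm a d, inf_comm aᶜ dᶜ]
    have : ((a ⊓ c) ⊔ (aᶜ ⊓ cᶜ)) ⊓ ((a ⊓ b) ⊔ (aᶜ ⊓ bᶜ)) ≤
        ((d ⊓ a) ⊔ (dᶜ ⊓ aᶜ)) ⊓ ((a ⊓ c) ⊔ (aᶜ ⊓ cᶜ)) :=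
      le_inf (le_trans inf_le_right (hda ▸ hed)) inf_le_left
    exact le_trans this (equiv_trans d a c)
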